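/- Let T be a symmetric 4-tensor of dimension d and define λ_maxabs(T) = max_{‖v‖=1} |Σ_{i,j,k,ℓ} T_{ijkℓ} v_i v_j v_k v_ℓ|. Then for all pairwise distinct indices s, t, u ∈ {1,…,d}, λ_maxabs(T) ≥ (9/59) · |T_{sstu}|. -/

import Mathlib

/-!
Restricted to the span of `e_s, e_t, e_u`, the quartic form `q(v) = ∑ T_f v_{f 0} ⋯ v_{f 3}`
becomes a ternary quartic `p(x, y, z)`, and homogeneity turns the defining property of `λ` into
`|p(w)| ≤ λ ‖w‖⁴`. The signed sum `∑_{ε, δ = ±1} ε δ p(x, ε, δ)` keeps only the monomials odd in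
both `y` and `z`, namely `12 T_sstu x² y z`, `4 T_tttu y³ z` and `4 T_tuuu y z³`, so its value at
`x = 1` minus its value at `x = 0` is `48 T_sstu`, while the bound on `p` gives at most
`4 · 9 λ + 4 · 4 λ`. Hence `λ ≥ (12/13) |T_sstu| ≥ (9/59) |T_sstu|`.
-/

open Finset Function

theorem sum_fun_fin_succ {ι M : Type*} [Fintype ι] [AddCommMonoid M] {n : ℕ}
    (F : (Fin (n + 1) → ι) → M) :
    ∑ f, F f = ∑ i, ∑ f : Fin n → ι, F (Fin.cons i f) := by
  rw [← (Fin.consEquiv fun _ => ι).sum_comp, Fintype.sum_prod_type]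
  rfl

section
variable {ι : Type*} [Fintype ι]

noncomputable def tensorForm {n : ℕ} (T : (Fin n → ι) → ℝ) (v : ι → ℝ) : ℝ :=
  ∑ f : Fin n → ι, T f * ∏ j, v (f j)

theorem tensorForm_four (T : (Fin 4 → ι) → ℝ) (v : ι → ℝ) :
    tensorForm T v = ∑ i, ∑ j, ∑ k, ∑ l, T ![i, j, k, l] * (v i * v j * v k * v l) := by
  simp only [tensorForm, sum_fun_fin_succ, Fintype.sum_unique, Fin.prod_univ_four]
  rfl

theorem tensorForm_smul {n : ℕ} (T : (Fin n → ι) → ℝ) (c : ℝ) (v : ι → ℝ) :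
    tensorForm T (c • v) = c ^ n * tensorForm T v := by
  simp only [tensorForm, Pi.smul_apply, smul_eq_mul, prod_mul_distrib, prod_const, card_univ,
    Fintype.card_fin, mul_sum]
  exact sum_congr rfl fun f _ => by ring

theorem abs_tensorForm_le {m : ℕ} (hm : m ≠ 0) (T : (Fin (2 * m) → ι) → ℝ) {L : ℝ}
    (hL : ∀ v : ι → ℝ, ∑ i, v i ^ 2 = 1 → |tensorForm T v| ≤ L) (v : ι → ℝ) :
    |tensorForm T v| ≤ L * (∑ i, v i ^ 2) ^ m := by
  set r := √(∑ i, v i ^ 2)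
  have hr : ∑ i, v i ^ 2 = r ^ 2 := (Real.sq_sqrt (sum_nonneg fun i _ => sq_nonneg (v i))).symm
  rcases eq_or_ne r 0 with hr0 | hr0
  · have hv : v = 0 := by
      have h := (Fintype.sum_eq_zero_iff_of_nonneg (f := fun i => v i ^ 2)
        fun i => sq_nonneg (v i)).1 (by rw [hr, hr0]; ring)
      ext i
      exact pow_eq_zero_iff two_ne_zero |>.1 (congrFun h i)
    have h0 : tensorForm T 0 = 0 := by simpa [hm] using tensorForm_smul T 0 0
    simp [hv, h0, hm]
  · have hunit : ∑ i, (r⁻¹ • v) i ^ 2 = 1 := by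
      simp only [Pi.smul_apply, smul_eq_mul, mul_pow, ← mul_sum, hr, inv_pow]
      exact inv_mul_cancel₀ (pow_ne_zero 2 hr0)
    have hv : tensorForm T v = (r ^ 2) ^ m * tensorForm T (r⁻¹ • v) := by
      rw [← pow_mul, ← tensorForm_smul, smul_smul, mul_inv_cancel₀ hr0, one_smul]
    rw [hv, abs_mul, abs_of_nonneg (by positivity), hr, mul_comm]
    exact mul_le_mul_of_nonneg_right (hL _ hunit) (by positivity)

theorem sum_sq_extend {κ : Type*} [Fintype κ] {e : κ → ι} (he : Injective e) (w : κ → ℝ) :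
    ∑ i, extend e w 0 i ^ 2 = ∑ k, w k ^ 2 := by
  refine (Fintype.sum_of_injective e he _ _ (fun i hi => ?_) fun k => ?_).symm
  · rw [extend_apply' _ _ _ hi, Pi.zero_apply, sq, zero_mul]
  · rw [he.extend_apply]

theorem tensorForm_extend {κ : Type*} [Fintype κ] {n : ℕ} {e : κ → ι} (he : Injective e)
    (T : (Fin n → ι) → ℝ) (w : κ → ℝ) :
    tensorForm T (extend e w 0) = tensorForm (fun g => T (e ∘ g)) w := by
  refine (Fintype.sum_of_injective (e ∘ ·) he.comp_left _ _ (fun f hf => ?_) fun g => ?_).symm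
  · obtain ⟨j, hj⟩ : ∃ j, f j ∉ Set.range e := by
      by_contra! h
      choose g hg using h
      exact hf ⟨g, funext hg⟩
    rw [prod_eq_zero (mem_univ j) (extend_apply' _ _ _ hj), mul_zero]
  · simp only [comp_apply, he.extend_apply]

end

theorem tensorForm_sign_combination (S : (Fin 4 → Fin 3) → ℝ)
    (hS : ∀ (σ : Equiv.Perm (Fin 4)) g, S (g ∘ σ) = S g) :
    (tensorForm S ![1, 1, 1] - tensorForm S ![1, -1, 1] - tensorForm S ![1, 1, -1]
        + tensorForm S ![1, -1, -1])
      - (tensorForm S ![0, 1, 1] - tensorForm S ![0, -1, 1] - tensorForm S ![0, 1, -1]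
        + tensorForm S ![0, -1, -1])
      = 48 * S ![0, 0, 1, 2] := by
  have h01 : ∀ a b c d, S ![a, b, c, d] = S ![b, a, c, d] := fun a b c d => by
    rw [← hS (Equiv.swap 0 1)]; congr 1; ext i; fin_cases i <;> rfl
  have h12 : ∀ a b c d, S ![a, b, c, d] = S ![a, c, b, d] := fun a b c d => by
    rw [← hS (Equiv.swap 1 2)]; congr 1; ext i; fin_cases i <;> rfl
  have h23 : ∀ a b c d, S ![a, b, c, d] = S ![a, b, d, c] := fun a b c d => by
    rw [← hS (Equiv.swap 2 3)]; congr 1; ext i; fin_cases i <;> rfl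
  simp only [tensorForm_four, Fin.sum_univ_three, Matrix.cons_val_zero, Matrix.cons_val_one,
    Matrix.cons_val_two, Matrix.head_cons, Matrix.tail_cons]
  -- used as permutative rewrites, these sort the indices of every entry
  simp only [h01, h12, h23]
  ring

theorem abs_apply_le_of_abs_tensorForm_le (S : (Fin 4 → Fin 3) → ℝ)
    (hS : ∀ (σ : Equiv.Perm (Fin 4)) g, S (g ∘ σ) = S g) {L : ℝ}
    (hL : ∀ w, |tensorForm S w| ≤ L * (∑ k, w k ^ 2) ^ 2) :
    12 * |S ![0, 0, 1, 2]| ≤ 13 * L := by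
  have h (a b c : ℝ) : |tensorForm S ![a, b, c]| ≤ L * (a ^ 2 + b ^ 2 + c ^ 2) ^ 2 := by
    simpa [Fin.sum_univ_three, add_assoc] using hL ![a, b, c]
  have h48 : |48 * S ![0, 0, 1, 2]| ≤ 52 * L := by
    have h₁ := h 1 1 1; have h₂ := h 1 (-1) 1; have h₃ := h 1 1 (-1)
    have h₄ := h 1 (-1) (-1); have h₅ := h 0 1 1; have h₆ := h 0 (-1) 1
    have h₇ := h 0 1 (-1); have h₈ := h 0 (-1) (-1)
    norm_num [abs_le] at h₁ h₂ h₃ h₄ h₅ h₆ h₇ h₈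
    rw [← tensorForm_sign_combination S hS, abs_le]
    constructor <;> linarith
  rw [abs_mul, abs_of_pos (by norm_num : (0 : ℝ) < 48)] at h48
  linarith

/-- For a symmetric 4-tensor T with λ_maxabs(T) = max_{‖v‖=1} |Σ T_{ijkℓ} v_i v_j v_k v_ℓ|,
for all pairwise distinct indices s, t, u one has λ_maxabs(T) ≥ (9/59) ⋅ |T_{sstu}|. -/
theorem symm4_lambda_maxabs_ge_sstu_entry
    (d : ℕ) (T : (Fin 4 → Fin d) → ℝ)
    (hsym : ∀ (p : Equiv.Perm (Fin 4)) (f : Fin 4 → Fin d), T (f ∘ p) = T f)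
    (lamMaxAbs : ℝ)
    (hmax : IsGreatest {x : ℝ | ∃ v : Fin d → ℝ, (∑ i, v i ^ 2 = 1)
        ∧ x = |∑ f : Fin 4 → Fin d, T f * ∏ j, v (f j)|} lamMaxAbs)
    (s t u : Fin d) (hst : s ≠ t) (hsu : s ≠ u) (htu : t ≠ u) :
    (9 / 59 : ℝ) * |T ![s, s, t, u]| ≤ lamMaxAbs := by
  set e : Fin 3 → Fin d := ![s, t, u]
  have he : Injective e := by
    intro a b h; fin_cases a <;> fin_cases b <;> simp_all [e, eq_comm]
  have hbound (w : Fin 3 → ℝ) :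
      |tensorForm (fun g => T (e ∘ g)) w| ≤ lamMaxAbs * (∑ k, w k ^ 2) ^ 2 := by
    rw [← tensorForm_extend he, ← sum_sq_extend he]
    exact abs_tensorForm_le (m := 2) two_ne_zero T (fun v hv => hmax.2 ⟨v, hv, rfl⟩) _
  have hentry := abs_apply_le_of_abs_tensorForm_le _ (fun σ g => hsym σ (e ∘ g)) hbound
  have he0012 : e ∘ ![0, 0, 1, 2] = ![s, s, t, u] := by ext i; fin_cases i <;> rfl
  rw [he0012] at hentry
  linarith [abs_nonneg (T ![s, s, t, u])]
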